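/- Let G = (V,E) be a finite, simple, undirected, connected graph, let n ≥ 1, and let S, T ⊆ V be connected vertex sets with |S| = |T| = n. Then there exists a valid plan from S to T whose makespan is at most diam(G) + n − 1, where diam(G) = max_{u,v∈V} dist(u,v). -/

import Mathlib

/-!
Fix `t ∈ T`. A configuration `Q` can occupy any vertex `v ∉ Q` adjacent to it in one move while
keeping occupied a given connected `A ∋ v` with `A ⊆ Q ∪ {v}` and `|A| ≤ |Q|`: a finite connected
graph has a non-cut vertex `u` outside any proper connected vertex set (one farthest from it), so
`Q ∪ {v} \ {u}` is connected, and the agents on a path from `u` to `v` inside `Q ∪ {v}` all advance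
one step. Moving towards `t` along a shortest path occupies `t` within `diam G` moves; growing a
connected `L ⊆ T ∩ Q` from `{t}` by one vertex of `T` per move, with `A = L ∪ {v}`, then reaches
`T` within `n - 1` further moves.
-/

open SimpleGraph

variable {V : Type*}

/-- A vertex set `Q` is connected if the subgraph of `G` induced by `Q` is connected. -/
def ConnSet (G : SimpleGraph V) (Q : Finset V) : Prop :=
  (G.induce (Q : Set V)).Connected

/-- `Q'` is reachable from `Q` in one step: there is a bijection `φ` between the two
vertex sets moving every agent to an adjacent vertex or keeping it in place,
with no swap conflict. -/
def OneStep (G : SimpleGraph V) (Q Q' : Finset V) : Prop :=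
  ∃ φ : {x // x ∈ Q} ≃ {x // x ∈ Q'},
    (∀ v : {x // x ∈ Q}, ((φ v : V) = (v : V)) ∨ G.Adj (v : V) ((φ v : V))) ∧
    ∀ u v : {x // x ∈ Q}, (u : V) ≠ (v : V) →
      ¬(((φ u : V) = (v : V)) ∧ ((φ v : V) = (u : V)))

/-- A valid plan from `S` to `T` with makespan `tstar`: a sequence of vertex sets,
each of size `n` and connected, starting at `S`, ending at `T`, with each
consecutive pair one-step reachable. -/
def ValidPlan (G : SimpleGraph V) (n : ℕ) (S T : Finset V) (tstar : ℕ)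
    (P : ℕ → Finset V) : Prop :=
  P 0 = S ∧ P tstar = T ∧
  (∀ k ≤ tstar, (P k).card = n ∧ ConnSet G (P k)) ∧
  ∀ k < tstar, OneStep G (P k) (P (k + 1))

/-- The diameter of a (finite) graph: the maximum of `dist u v` over all pairs. -/
noncomputable def graphDiam (G : SimpleGraph V) : ℕ :=
  sSup (Set.range fun p : V × V => G.dist p.1 p.2)

namespace SimpleGraph

theorem connected_induce_induce_iff (G : SimpleGraph V) (s : Set V) (B : Set s) :
    ((G.induce s).induce B).Connected ↔ (G.induce (Subtype.val '' B)).Connected :=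
  Iso.connected_iff
    { Equiv.Set.image Subtype.val B Subtype.val_injective with map_rel_iff' := Iff.rfl }

theorem Connected.exists_notMem_connected_induce_compl_singleton {W : Type*} [Finite W]
    {H : SimpleGraph W} (hH : H.Connected) {A : Set W} (hA : (H.induce A).Connected)
    (hAne : A ≠ Set.univ) : ∃ u ∉ A, (H.induce {u}ᶜ).Connected := by
  classical
  obtain ⟨⟨a₀, ha₀⟩⟩ := hA.nonempty
  set d : W → ℕ := fun x => sInf (H.dist x '' A)
  have hd_le : ∀ x, ∀ a ∈ A, d x ≤ H.dist x a := fun x a ha => Nat.sInf_le ⟨a, ha, rfl⟩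
  have hd_mem : ∀ x, ∃ a ∈ A, H.dist x a = d x := fun x =>
    Nat.sInf_mem (Set.Nonempty.image _ ⟨a₀, ha₀⟩)
  obtain ⟨u, huA, hu_max⟩ :=
    Set.exists_max_image Aᶜ d (Set.toFinite _) (Set.nonempty_compl.2 hAne)
  have hAu : A ⊆ {u}ᶜ := fun a ha (hau : a = u) => huA (hau ▸ ha)
  -- `u` is farthest from `A`, so a shortest walk from any other vertex to `A` avoids it.
  have hreach_A : ∀ x (hx : x ≠ u), ∃ a, ∃ ha : a ∈ A,
      (H.induce {u}ᶜ).Reachable ⟨x, hx⟩ ⟨a, hAu ha⟩ := by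
    intro x hx
    by_cases hxA : x ∈ A
    · exact ⟨x, hxA, .rfl⟩
    obtain ⟨a, ha, hxa⟩ := hd_mem x
    obtain ⟨p, hp⟩ := hH.exists_walk_length_eq_dist x a
    have hpu : ∀ z ∈ p.support, z ∈ ({u}ᶜ : Set W) := by
      rintro z hz (rfl : z = u)
      have := (dist_le (p.dropUntil z hz)).trans_lt (Walk.length_dropUntil_lt_length hz hx.symm)
      have := hd_le z a ha
      have := hu_max x hxA
      omega
    exact ⟨a, ha, (p.induce _ hpu).reachable⟩
  refine ⟨u, huA, (connected_iff_exists_forall_reachable _).2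
    ⟨(⟨a₀, hAu ha₀⟩ : ({u}ᶜ : Set W)), ?_⟩⟩
  rintro ⟨x, hx⟩
  obtain ⟨a, ha, hxa⟩ := hreach_A x hx
  have ha₀a : (H.induce {u}ᶜ).Reachable ⟨a₀, hAu ha₀⟩ ⟨a, hAu ha⟩ :=
    (hA.preconnected ⟨a₀, ha₀⟩ ⟨a, ha⟩).map (H.induceHomOfLE hAu).toHom
  exact ha₀a.trans hxa.symm

theorem Connected.exists_adj_dist_lt {G : SimpleGraph V} (hG : G.Connected) {u v : V}
    (huv : u ≠ v) : ∃ w, G.Adj u w ∧ G.dist w v < G.dist u v := by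
  obtain ⟨p, hp⟩ := hG.exists_walk_length_eq_dist u v
  have hnil := Walk.not_nil_of_ne (p := p) huv
  refine ⟨p.snd, p.adj_snd hnil, ?_⟩
  have := dist_le p.tail
  have := Walk.length_tail_add_one hnil
  omega

theorem Walk.IsPath.formPerm_support_getVert {G : SimpleGraph V} [DecidableEq V] {u v : V}
    {p : G.Walk u v} (hp : p.IsPath) {i : ℕ} (hi : i < p.length) :
    p.support.formPerm (p.getVert i) = p.getVert (i + 1) := by
  rw [p.getVert_eq_support_getElem hi.le, p.getVert_eq_support_getElem hi,
    List.formPerm_apply_lt_getElem _ hp.support_nodup]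

theorem Walk.formPerm_support_end {G : SimpleGraph V} [DecidableEq V] {u v : V}
    (p : G.Walk u v) : p.support.formPerm v = u := by
  have := List.formPerm_apply_getLast u p.support.tail
  simpa [p.cons_tail_support, p.getLast_support] using this

end SimpleGraph

theorem connSet_singleton (G : SimpleGraph V) (v : V) : ConnSet G {v} := by
  rw [ConnSet, Finset.coe_singleton, induce_singleton_eq_top]
  exact connected_top

namespace ConnSet

variable {G : SimpleGraph V}

theorem nonempty {Q : Finset V} (hQ : ConnSet G Q) : Q.Nonempty :=
  let ⟨⟨x, hx⟩⟩ := Connected.nonempty hQ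
  ⟨x, hx⟩

theorem insert [DecidableEq V] {Q : Finset V} {q v : V} (hQ : ConnSet G Q) (hq : q ∈ Q)
    (hqv : G.Adj q v) : ConnSet G (insert v Q) := by
  have := connected_induce_union hQ.preconnected (connSet_singleton G v).preconnected hq
    (Finset.mem_coe.2 (Finset.mem_singleton_self v)) hqv
  rwa [Finset.coe_singleton, Set.union_singleton, ← Finset.coe_insert] at this

theorem exists_isPath {R : Finset V} (hR : ConnSet G R) {u v : V} (hu : u ∈ R) (hv : v ∈ R) :
    ∃ p : G.Walk u v, p.IsPath ∧ ∀ x ∈ p.support, x ∈ R := by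
  obtain ⟨p, hp⟩ := Connected.exists_isPath hR ⟨u, hu⟩ ⟨v, hv⟩
  have hsupp : ∀ x ∈ (p.map (Embedding.induce (R : Set V)).toHom).support, x ∈ R := by
    rw [Walk.support_map]
    rintro _ hx
    obtain ⟨x, -, rfl⟩ := List.mem_map.1 hx
    exact x.2
  exact ⟨_, hp.map Subtype.val_injective, hsupp⟩

theorem exists_adj_of_ssubset {T L : Finset V} (hT : ConnSet G T) (hL : L.Nonempty)
    (hLT : L ⊂ T) : ∃ q ∈ L, ∃ v ∈ T, v ∉ L ∧ G.Adj q v := by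
  obtain ⟨a, ha⟩ := hL
  obtain ⟨b, hbT, hbL⟩ := Finset.exists_of_ssubset hLT
  obtain ⟨p⟩ := hT.preconnected ⟨a, hLT.subset ha⟩ ⟨b, hbT⟩
  obtain ⟨d, -, hd₁, hd₂⟩ := p.exists_boundary_dart {x | x.1 ∈ L} ha hbL
  exact ⟨_, hd₁, _, d.snd.2, hd₂, d.adj⟩

theorem exists_erase_of_ssubset [DecidableEq V] {R A : Finset V} (hR : ConnSet G R)
    (hA : ConnSet G A) (hAR : A ⊂ R) : ∃ u ∈ R, u ∉ A ∧ ConnSet G (R.erase u) := by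
  have hA' : ((G.induce R).induce (Subtype.val ⁻¹' A)).Connected := by
    rwa [connected_induce_induce_iff, Subtype.image_preimage_coe,
      Set.inter_eq_right.2 (Finset.coe_subset.2 hAR.subset)]
  obtain ⟨w, hwR, hwA⟩ := Finset.exists_of_ssubset hAR
  obtain ⟨u, huA, hu⟩ := hR.exists_notMem_connected_induce_compl_singleton hA'
    (Set.ne_univ_iff_exists_notMem _ |>.2 ⟨⟨w, hwR⟩, hwA⟩)
  refine ⟨u, u.2, huA, ?_⟩
  rw [connected_induce_induce_iff] at hu
  rwa [Set.image_val_compl, Set.image_singleton, ← Finset.coe_erase] at hu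

end ConnSet

section OneStep

variable {G : SimpleGraph V}

theorem oneStep_of_perm {Q Q' : Finset V} (σ : Equiv.Perm V) (hσ : ∀ x, x ∈ Q ↔ σ x ∈ Q')
    (hmove : ∀ x ∈ Q, σ x = x ∨ G.Adj x (σ x))
    (hswap : ∀ x ∈ Q, σ x ∈ Q → σ (σ x) = x → σ x = x) : OneStep G Q Q' := by
  refine ⟨σ.subtypeEquiv hσ, fun x => hmove x x.2, ?_⟩
  rintro ⟨x, hx⟩ ⟨y, hy⟩ hxy ⟨hσx, hσy⟩
  obtain rfl : σ x = y := hσx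
  exact hxy (hswap x hx hy hσy).symm

-- The witness is the cyclic shift along `p`: every agent on `p` advances one vertex.
theorem oneStep_erase_insert_of_isPath [DecidableEq V] {Q : Finset V} {u v : V}
    {p : G.Walk u v} (hp : p.IsPath) (hu : u ∈ Q) (hv : v ∉ Q)
    (hpQ : ∀ x ∈ p.support, x ∈ insert v Q) : OneStep G Q ((insert v Q).erase u) := by
  set σ := p.support.formPerm
  have hinj {i j : ℕ} (hi : i ≤ p.length) (hj : j ≤ p.length)
      (h : p.getVert i = p.getVert j) : i = j :=
    hp.getVert_injOn hi hj h
  have hne_end {i : ℕ} (hi : i < p.length) : p.getVert i ≠ v := fun h =>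
    (hinj hi.le le_rfl (h.trans p.getVert_length.symm)).not_lt hi
  have hne_start {i : ℕ} (hi : i ≤ p.length) (hi₀ : i ≠ 0) : p.getVert i ≠ u := fun h =>
    hi₀ (hinj hi (Nat.zero_le _) (h.trans p.getVert_zero.symm))
  have hcases : ∀ x, x ∉ p.support ∨ x = v ∨ ∃ i < p.length, p.getVert i = x := by
    intro x
    by_cases hx : x ∈ p.support
    · obtain ⟨i, rfl, hi⟩ := Walk.mem_support_iff_exists_getVert.1 hx
      rcases hi.lt_or_eq with hi | rfl
      · exact .inr (.inr ⟨i, hi, rfl⟩)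
      · exact .inr (.inl p.getVert_length)
    · exact .inl hx
  have hmemQ {i : ℕ} (hi : i < p.length) : p.getVert i ∈ Q :=
    (Finset.mem_insert.1 (hpQ _ (p.getVert_mem_support i))).resolve_left (hne_end hi)
  apply oneStep_of_perm σ
  · intro x
    rcases hcases x with hx | rfl | ⟨i, hi, rfl⟩
    · have hxu : x ≠ u := fun h => hx (h ▸ p.start_mem_support)
      have hxv : x ≠ v := fun h => hx (h ▸ p.end_mem_support)
      simp [σ, List.formPerm_apply_of_notMem hx, hxu, hxv]
    · simp [σ, p.formPerm_support_end, hv]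
    · rw [hp.formPerm_support_getVert hi]
      exact iff_of_true (hmemQ hi) (Finset.mem_erase.2
        ⟨hne_start hi (Nat.succ_ne_zero i), hpQ _ (p.getVert_mem_support _)⟩)
  · intro x hx
    rcases hcases x with hx' | rfl | ⟨i, hi, rfl⟩
    · exact .inl (List.formPerm_apply_of_notMem hx')
    · exact absurd hx hv
    · rw [hp.formPerm_support_getVert hi]
      exact .inr (p.adj_getVert_succ hi)
  · intro x hx hσx hσσx
    rcases hcases x with hx' | rfl | ⟨i, hi, rfl⟩
    · exact List.formPerm_apply_of_notMem hx'
    · exact absurd hx hv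
    · rw [hp.formPerm_support_getVert hi] at hσx hσσx
      have hi' : i + 1 < p.length := by
        refine lt_of_le_of_ne hi (fun h => hv ?_)
        rwa [h, p.getVert_length] at hσx
      rw [hp.formPerm_support_getVert hi'] at hσσx
      have := hinj (by omega) hi.le hσσx
      omega

theorem exists_oneStep_superset [DecidableEq V] {Q A : Finset V} {v : V}
    (hR : ConnSet G (insert v Q)) (hv : v ∉ Q) (hA : ConnSet G A) (hvA : v ∈ A)
    (hAR : A ⊆ insert v Q) (hAcard : A.card ≤ Q.card) :
    ∃ Q', A ⊆ Q' ∧ Q'.card = Q.card ∧ ConnSet G Q' ∧ OneStep G Q Q' := by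
  have hAR' : A ⊂ insert v Q := Finset.ssubset_iff_subset_ne.2 ⟨hAR, fun h => by
    rw [h, Finset.card_insert_of_notMem hv] at hAcard
    omega⟩
  obtain ⟨u, huR, huA, hQ'⟩ := hR.exists_erase_of_ssubset hA hAR'
  have huv : u ≠ v := fun h => huA (h ▸ hvA)
  have huQ : u ∈ Q := (Finset.mem_insert.1 huR).resolve_left huv
  obtain ⟨p, hp, hpR⟩ := hR.exists_isPath huR (Finset.mem_insert_self v Q)
  refine ⟨_, fun x hx => Finset.mem_erase.2 ⟨ne_of_mem_of_not_mem hx huA, hAR hx⟩, ?_, hQ',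
    oneStep_erase_insert_of_isPath hp huQ hv hpR⟩
  rw [Finset.card_erase_of_mem huR, Finset.card_insert_of_notMem hv, Nat.add_sub_cancel]

end OneStep

def HasPlanWithin (G : SimpleGraph V) (n : ℕ) (S T : Finset V) (k : ℕ) : Prop :=
  ∃ t ≤ k, ∃ P : ℕ → Finset V, ValidPlan G n S T t P

namespace HasPlanWithin

variable {G : SimpleGraph V} {n : ℕ}

theorem refl {Q : Finset V} (hQcard : Q.card = n) (hQ : ConnSet G Q) (k : ℕ) :
    HasPlanWithin G n Q Q k :=
  ⟨0, Nat.zero_le k, fun _ => Q, rfl, rfl, fun _ _ => ⟨hQcard, hQ⟩,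
    fun _ h => absurd h (Nat.not_lt_zero _)⟩

theorem mono {S T : Finset V} {k k' : ℕ} (h : HasPlanWithin G n S T k) (hk : k ≤ k') :
    HasPlanWithin G n S T k' :=
  let ⟨t, ht, hP⟩ := h
  ⟨t, ht.trans hk, hP⟩

theorem cons {Q Q' T : Finset V} {k : ℕ} (hstep : OneStep G Q Q') (hQcard : Q.card = n)
    (hQ : ConnSet G Q) (h : HasPlanWithin G n Q' T k) : HasPlanWithin G n Q T (k + 1) := by
  obtain ⟨t, ht, P, hP0, hPt, hPvalid, hPstep⟩ := h
  refine ⟨t + 1, by omega, fun i => if i = 0 then Q else P (i - 1), by simp, by simpa using hPt,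
    ?_, ?_⟩
  · rintro (_ | i) hi
    · simpa using ⟨hQcard, hQ⟩
    · simpa using hPvalid i (by omega)
  · rintro (_ | i) hi
    · simpa [hP0] using hstep
    · simpa using hPstep i (by omega)

end HasPlanWithin

section Plan

variable {G : SimpleGraph V} {n : ℕ} {T : Finset V}

theorem hasPlanWithin_of_subset [DecidableEq V] (hT : ConnSet G T) (hTcard : T.card = n)
    {L Q : Finset V} (hL : ConnSet G L) (hLT : L ⊆ T) (hQ : ConnSet G Q) (hQcard : Q.card = n)
    (hLQ : L ⊆ Q) : HasPlanWithin G n Q T (n - L.card) := by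
  by_cases hLeq : L = T
  · obtain rfl : T = Q := Finset.eq_of_subset_of_card_le (hLeq ▸ hLQ) (by omega)
    exact .refl hQcard hQ _
  have hLssub : L ⊂ T := Finset.ssubset_iff_subset_ne.2 ⟨hLT, hLeq⟩
  have hLcard : L.card < n := hTcard ▸ Finset.card_lt_card hLssub
  obtain ⟨q, hq, v, hvT, hvL, hqv⟩ := hT.exists_adj_of_ssubset hL.nonempty hLssub
  have hcard : (insert v L).card = L.card + 1 := Finset.card_insert_of_notMem hvL
  have hL' : ConnSet G (insert v L) := hL.insert hq hqv
  have hL'T : insert v L ⊆ T := Finset.insert_subset hvT hLT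
  by_cases hvQ : v ∈ Q
  · exact (hasPlanWithin_of_subset hT hTcard hL' hL'T hQ hQcard
      (Finset.insert_subset hvQ hLQ)).mono (by omega)
  obtain ⟨Q', hLQ', hQ'card, hQ', hstep⟩ := exists_oneStep_superset (hQ.insert (hLQ hq) hqv) hvQ
    hL' (Finset.mem_insert_self v L) (Finset.insert_subset_insert v hLQ) (by omega)
  exact ((hasPlanWithin_of_subset hT hTcard hL' hL'T hQ' (hQ'card.trans hQcard) hLQ').cons
    hstep hQcard hQ).mono (by omega)
termination_by n - L.card

theorem hasPlanWithin_of_dist_le [DecidableEq V] (hG : G.Connected) (hT : ConnSet G T)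
    (hTcard : T.card = n) {t : V} (ht : t ∈ T) (d : ℕ) {Q : Finset V} {q : V}
    (hQ : ConnSet G Q) (hQcard : Q.card = n) (hq : q ∈ Q) (hqt : G.dist q t ≤ d) :
    HasPlanWithin G n Q T (d + (n - 1)) := by
  induction d generalizing Q q with
  | zero =>
    obtain rfl : q = t := hG.dist_eq_zero_iff.1 (Nat.le_zero.1 hqt)
    simpa using hasPlanWithin_of_subset hT hTcard (connSet_singleton G q)
      (Finset.singleton_subset_iff.2 ht) hQ hQcard (Finset.singleton_subset_iff.2 hq)
  | succ d ih =>
    by_cases hqt' : q = t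
    · exact (ih hQ hQcard hq (by simp [hqt'])).mono (by omega)
    obtain ⟨y, hqy, hyt⟩ := hG.exists_adj_dist_lt hqt'
    by_cases hyQ : y ∈ Q
    · exact (ih hQ hQcard hyQ (by omega)).mono (by omega)
    obtain ⟨Q', hyQ', hQ'card, hQ', hstep⟩ := exists_oneStep_superset (hQ.insert hq hqy) hyQ
      (connSet_singleton G y) (Finset.mem_singleton_self y)
      (Finset.singleton_subset_iff.2 (Finset.mem_insert_self y Q))
      (Finset.card_singleton y ▸ Finset.card_pos.2 ⟨q, hq⟩)
    exact ((ih hQ' (hQ'card.trans hQcard) (Finset.singleton_subset_iff.1 hyQ') (by omega)).cons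
      hstep hQcard hQ).mono (by omega)

end Plan

theorem stmt1_general [Fintype V] (G : SimpleGraph V) (hG : G.Connected)
    (n : ℕ) (S T : Finset V)
    (hS : ConnSet G S) (hT : ConnSet G T)
    (hScard : S.card = n) (hTcard : T.card = n) :
    ∃ (tstar : ℕ) (P : ℕ → Finset V),
      ValidPlan G n S T tstar P ∧ tstar ≤ graphDiam G + n - 1 := by
  classical
  obtain ⟨s, hs⟩ := hS.nonempty
  obtain ⟨t, ht⟩ := hT.nonempty
  have hdiam : G.dist s t ≤ graphDiam G :=
    le_csSup (Set.finite_range _).bddAbove ⟨(s, t), rfl⟩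
  obtain ⟨k, hk, P, hP⟩ := hasPlanWithin_of_dist_le hG hT hTcard ht _ hS hScard hs hdiam
  have hn : 1 ≤ n := hTcard ▸ Finset.card_pos.2 ⟨t, ht⟩
  exact ⟨k, P, hP, by omega⟩

/-- There is always a valid plan from `S` to `T` with makespan at most
`diam(G) + n - 1`. -/
theorem stmt1 [Fintype V] (G : SimpleGraph V) (hG : G.Connected)
    (n : ℕ) (hn : 1 ≤ n) (S T : Finset V)
    (hS : ConnSet G S) (hT : ConnSet G T)
    (hScard : S.card = n) (hTcard : T.card = n) :
    ∃ (tstar : ℕ) (P : ℕ → Finset V),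
      ValidPlan G n S T tstar P ∧ tstar ≤ graphDiam G + n - 1 :=
  stmt1_general G hG n S T hS hT hScard hTcard
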